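/- For any positive integer n with s₂(n+1) ≥ s₂(n), the 2-adic valuation of C(2n−2, n−3) satisfies ν(C(2n−2, n−3)) ≥ s₂(n+1) − 2 + ν(n−1) + ν(n−2) ≥ s₂(n) − 1. -/

import Mathlib

/-!
Legendre's formula `ν(m!) = m - s₂(m)` turns every valuation in sight into digit sums:
`ν(C(a + b, b)) = s₂(a) + s₂(b) - s₂(a + b)` and `ν(m + 1) = s₂(m) + 1 - s₂(m + 1)`.
With `s₂(2m) = s₂(m)` this gives `ν(C(2n-2, n-3)) = s₂(n-3) + s₂(n+1) - s₂(n-1)` and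
`ν(n-1) + ν(n-2) = s₂(n-3) + 2 - s₂(n-1)`, so the first inequality is an equality; the hypothesis
`s₂(n) ≤ s₂(n+1)` rules out `s₂(n+1) = 1`, where the truncated `s₂(n+1) - 2` would break it.
For the second inequality: if `n` is even then `s₂(n+1) = s₂(n) + 1`, and if `n` is odd then
`ν(n-1) ≥ 1`.
-/

/-- binary digit sum -/
def s2 (n : ℕ) : ℕ := (Nat.digits 2 n).sum

/-- 2-adic valuation -/
def nu (n : ℕ) : ℕ := padicValNat 2 n

open scoped Nat

lemma nu_factorial_add_s2 (m : ℕ) : nu m ! + s2 m = m := by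
  have legendre := sub_one_mul_padicValNat_factorial (p := 2) m
  have digit_sum_le := Nat.digit_sum_le 2 m
  simp only [nu, s2] at *
  omega

lemma s2_pos {m : ℕ} (hm : m ≠ 0) : 0 < s2 m := by
  have hlt := sub_one_mul_padicValNat_factorial_lt_of_ne_zero (p := 2) hm
  have hlegendre := nu_factorial_add_s2 m
  simp only [nu] at *
  omega

lemma s2_two_mul (m : ℕ) : s2 (2 * m) = s2 m := by
  rcases Nat.eq_zero_or_pos m with rfl | hm
  · rfl
  · simp [s2, Nat.digits_def' one_lt_two (by omega : 0 < 2 * m)]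

lemma nu_choose_add_s2 (a b : ℕ) : nu ((a + b).choose b) + s2 (a + b) = s2 a + s2 b := by
  have hval : nu ((a + b).choose b) + nu a ! + nu b ! = nu (a + b)! := by
    have hchoose := (Nat.choose_pos (Nat.le_add_left b a)).ne'
    simp only [nu]
    rw [← padicValNat.mul hchoose (Nat.factorial_ne_zero a),
      ← padicValNat.mul (mul_ne_zero hchoose (Nat.factorial_ne_zero a)) (Nat.factorial_ne_zero b),
      Nat.add_choose_mul_factorial_mul_factorial]
  have := nu_factorial_add_s2 a
  have := nu_factorial_add_s2 b
  have := nu_factorial_add_s2 (a + b)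
  omega

lemma nu_succ_add_s2_succ (m : ℕ) : nu (m + 1) + s2 (m + 1) = s2 m + 1 := by
  have h := nu_choose_add_s2 m 1
  rwa [Nat.choose_one_right, show s2 1 = 1 by simp [s2]] at h

theorem stmt12 (n : ℕ) (hn : 3 ≤ n) (hmono : s2 n ≤ s2 (n + 1)) :
    s2 (n + 1) - 2 + nu (n - 1) + nu (n - 2) ≤ nu (Nat.choose (2 * n - 2) (n - 3)) ∧
    s2 n - 1 ≤ s2 (n + 1) - 2 + nu (n - 1) + nu (n - 2) := by
  obtain ⟨m, rfl⟩ : ∃ m, n = m + 3 := ⟨n - 3, by omega⟩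
  replace hmono : s2 (m + 3) ≤ s2 (m + 4) := hmono
  rw [show m + 3 + 1 = m + 4 from rfl, show m + 3 - 1 = m + 2 from rfl,
    show m + 3 - 2 = m + 1 from rfl, Nat.add_sub_cancel, show 2 * (m + 3) - 2 = m + 4 + m by omega]
  have hchoose : nu ((m + 4 + m).choose m) + s2 (m + 2) = s2 (m + 4) + s2 m := by
    rw [← s2_two_mul, show 2 * (m + 2) = m + 4 + m by ring]
    exact nu_choose_add_s2 (m + 4) m
  have h1 : nu (m + 1) + s2 (m + 1) = s2 m + 1 := nu_succ_add_s2_succ m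
  have h2 : nu (m + 2) + s2 (m + 2) = s2 (m + 1) + 1 := nu_succ_add_s2_succ (m + 1)
  have h3 : nu (m + 3) + s2 (m + 3) = s2 (m + 2) + 1 := nu_succ_add_s2_succ (m + 2)
  have h4 : nu (m + 4) + s2 (m + 4) = s2 (m + 3) + 1 := nu_succ_add_s2_succ (m + 3)
  have hpos2 := s2_pos (m := m + 2) (by omega)
  have hpos3 := s2_pos (m := m + 3) (by omega)
  have hparity : nu (m + 4) = 0 ∨ (nu (m + 3) = 0 ∧ 1 ≤ nu (m + 2)) := by
    rcases Nat.even_or_odd m with ⟨k, hk⟩ | ⟨k, hk⟩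
    · exact .inr ⟨padicValNat.eq_zero_of_not_dvd (by omega),
        one_le_padicValNat_of_dvd (by omega) ⟨k + 1, by omega⟩⟩
    · exact .inl (padicValNat.eq_zero_of_not_dvd (by omega))
  omega
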